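/- arXiv:2205.06875 — 2 statements merged into one kernel-verified Lean document; each statement's English description precedes it below -/
import Mathlib

section
/- Let 𝓛 be a thicket on S and M ∈ 𝓜̄_𝓛. For U, T ∈ 𝓛 with U ⊆ T, π_U^T maps M_T into M_U and hence induces maps π_U^T : M_T → M_U and π̄_U^T : V_T/M_T → V_U/M_U. Let σ_{𝓛,M} be the ℂ-vector space of families (α_T)_{T ∈ 𝓛} with α_T ∈ Hom_ℂ(M_T, V_T/M_T) such that π̄_U^T ∘ α_T = α_U ∘ π_U^T for all U, T ∈ 𝓛 with U ⊆ T. Then dim_ℂ σ_{𝓛,M} = |S| − 2. -/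
/-!
Induct on `|S|`. Call `T ∈ 𝓛` vanishing when `π_T^S` kills the line `M_S`; otherwise
`π_T^S : M_S → M_T` is an isomorphism of lines. Vanishing members are closed under passing to
smaller members and, since functions constant on two meeting sets are constant on their union,
under unions of meeting pairs (which lie in `𝓛` by the thicket axiom). Hence the maximal
vanishing members `T_1, …, T_k` are pairwise disjoint proper subsets of `S`.

Evaluation `α ↦ α_S` maps `σ_{𝓛,M}` onto the kernel of `β ↦ (π̄_{T_i}^S ∘ β)_i`: a preimage of
such a `β` is `π̄_T^S ∘ β ∘ (π_T^S)⁻¹` on non-vanishing `T` and `0` on vanishing `T`. Because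
the `T_i` are disjoint, `V_S → ∏ V_{T_i}` is onto, hence so is `β ↦ (π̄_{T_i}^S ∘ β)_i`, with
target of dimension `∑ (|T_i| - 2)`. A family with `α_S = 0` vanishes on every non-vanishing
`T`, so the kernel of evaluation is `∏ σ_{𝓛|T_i}`, of dimension `∑ (|T_i| - 2)` by induction.
Adding up, `dim σ_{𝓛,M} = dim Hom(M_S, V_S/M_S) = |S| - 2`.
-/

variable {α : Type*} [DecidableEq α]

/-- A thicket on `S`. -/
def IsThicket (S : Finset α) (L : Finset (Finset α)) : Prop :=
  S ∈ L ∧ (∀ T ∈ L, T ⊆ S) ∧ (∀ T ∈ L, 2 ≤ T.card) ∧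
    ∀ U ∈ L, ∀ V ∈ L, (U ∩ V).Nonempty → U ∪ V ∈ L

noncomputable section

/-- The subspace of constant functions in `F(T, ℂ) = (T → ℂ)`. -/
def constSub (T : Finset α) : Submodule ℂ (↥T → ℂ) :=
  Submodule.span ℂ {fun _ => 1}

/-- `V_T = F(T, ℂ)/C_T`. -/
abbrev Vspace (T : Finset α) : Type _ := (↥T → ℂ) ⧸ constSub T

/-- Restriction of functions, as a linear map `F(T,ℂ) → F(U,ℂ)` for `U ⊆ T`. -/
def restr (U T : Finset α) (h : U ⊆ T) : (↥T → ℂ) →ₗ[ℂ] (↥U → ℂ) :=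
  LinearMap.funLeft ℂ ℂ (fun u => ⟨u.1, h u.2⟩)

/-- The induced map `π_U^T : V_T → V_U`. -/
def piUT (U T : Finset α) (h : U ⊆ T) : Vspace T →ₗ[ℂ] Vspace U :=
  Submodule.mapQ (constSub T) (constSub U) (restr U T h) (by
    rw [constSub, Submodule.span_le, Set.singleton_subset_iff, SetLike.mem_coe,
      Submodule.mem_comap]
    exact Submodule.subset_span rfl)

/-- The space `σ_{L,M}` of families `(α_T)_{T ∈ L}` with
`α_T ∈ Hom(M_T, V_T/M_T)` satisfying `π̄_U^T ∘ α_T = α_U ∘ π_U^T` for all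
`U ⊆ T` in `L`. -/
def sigmaSub (L : Finset (Finset α)) (M : (T : ↥L) → Submodule ℂ (Vspace T.1))
    (hM : ∀ (U T : ↥L) (h : U.1 ⊆ T.1),
      M T ≤ Submodule.comap (piUT U.1 T.1 h) (M U)) :
    Submodule ℂ ((T : ↥L) → (↥(M T) →ₗ[ℂ] (Vspace T.1 ⧸ M T))) where
  carrier := {a | ∀ (U T : ↥L) (h : U.1 ⊆ T.1),
    (Submodule.mapQ (M T) (M U) (piUT U.1 T.1 h) (hM U T h)).comp (a T)
      = (a U).comp ((piUT U.1 T.1 h).restrict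
          (fun x hx => Submodule.mem_comap.mp (hM U T h hx)))}
  add_mem' := by
    intro a b ha hb U T h
    simp only [Pi.add_apply, LinearMap.comp_add, LinearMap.add_comp,
      ha U T h, hb U T h]
  zero_mem' := by
    intro U T h
    simp
  smul_mem' := by
    intro c a ha U T h
    simp only [Pi.smul_apply, LinearMap.comp_smul, LinearMap.smul_comp, ha U T h]

open Function Finset

section

omit [DecidableEq α]

lemma piUT_mk (U T : Finset α) (h : U ⊆ T) (g : ↥T → ℂ) :
    piUT U T h (Submodule.Quotient.mk g) = Submodule.Quotient.mk (restr U T h g) := rfl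

lemma piUT_piUT {U T W : Finset α} (h : U ⊆ T) (h' : T ⊆ W) (x : Vspace W) :
    piUT U T h (piUT T W h' x) = piUT U W (h.trans h') x := by
  obtain ⟨g, rfl⟩ := Submodule.Quotient.mk_surjective _ x
  rfl

lemma piUT_self (T : Finset α) (h : T ⊆ T) (x : Vspace T) : piUT T T h x = x := by
  obtain ⟨g, rfl⟩ := Submodule.Quotient.mk_surjective _ x
  rfl

lemma Vspace.mk_eq_zero_iff {T : Finset α} (g : ↥T → ℂ) :
    (Submodule.Quotient.mk g : Vspace T) = 0 ↔ ∃ c : ℂ, ∀ t, g t = c := by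
  rw [Submodule.Quotient.mk_eq_zero, constSub, Submodule.mem_span_singleton]
  constructor
  · rintro ⟨c, rfl⟩
    exact ⟨c, fun _ => by simp⟩
  · rintro ⟨c, hc⟩
    exact ⟨c, funext fun t => by simp [hc]⟩

lemma finrank_Vspace_add_one {T : Finset α} (hT : T.Nonempty) :
    Module.finrank ℂ (Vspace T) + 1 = T.card := by
  have hC : Module.finrank ℂ (constSub T) = 1 := by
    refine finrank_span_singleton fun h => ?_
    obtain ⟨t, ht⟩ := hT
    simpa using congrFun h ⟨t, ht⟩
  rw [← hC, Submodule.finrank_quotient_add_finrank, Module.finrank_fintype_fun_eq_card,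
    Fintype.card_coe]

-- Without this, instance search fails on families `(T : L) → (M T →ₗ[ℂ] Vspace T ⧸ M T)`.
instance (T : Finset α) : AddCommGroup (Vspace T) := Submodule.Quotient.addCommGroup _

-- `sigmaSub` is a submodule for the `AddCommMonoid` structure of its ambient space, so this
-- instance and the next one are not found automatically.
instance (L : Finset (Finset α)) (M : (T : ↥L) → Submodule ℂ (Vspace T.1))
    (hM : ∀ (U T : ↥L) (h : U.1 ⊆ T.1), M T ≤ Submodule.comap (piUT U.1 T.1 h) (M U)) :
    AddCommGroup (sigmaSub L M hM) :=
  Submodule.addCommGroup (M := (T : ↥L) → M T →ₗ[ℂ] Vspace T.1 ⧸ M T) _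

instance (L : Finset (Finset α)) (M : (T : ↥L) → Submodule ℂ (Vspace T.1))
    (hM : ∀ (U T : ↥L) (h : U.1 ⊆ T.1), M T ≤ Submodule.comap (piUT U.1 T.1 h) (M U)) :
    FiniteDimensional ℂ (sigmaSub L M hM) :=
  FiniteDimensional.finiteDimensional_submodule (V := (T : ↥L) → M T →ₗ[ℂ] Vspace T.1 ⧸ M T) _

variable {L : Finset (Finset α)} {M : (T : ↥L) → Submodule ℂ (Vspace T.1)}
  (hM : ∀ (U T : ↥L) (h : U.1 ⊆ T.1), M T ≤ Submodule.comap (piUT U.1 T.1 h) (M U))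

def piM (U T : ↥L) (h : U.1 ⊆ T.1) : M T →ₗ[ℂ] M U :=
  (piUT U.1 T.1 h).restrict fun _ hx => hM U T h hx

def piBar (U T : ↥L) (h : U.1 ⊆ T.1) : (Vspace T.1 ⧸ M T) →ₗ[ℂ] (Vspace U.1 ⧸ M U) :=
  Submodule.mapQ (M T) (M U) (piUT U.1 T.1 h) (hM U T h)

lemma mem_sigmaSub_iff {a : (T : ↥L) → (M T →ₗ[ℂ] Vspace T.1 ⧸ M T)} :
    a ∈ sigmaSub L M hM ↔
      ∀ (U T : ↥L) (h : U.1 ⊆ T.1), (piBar hM U T h).comp (a T) = (a U).comp (piM hM U T h) :=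
  Iff.rfl

lemma piM_piM {U T W : ↥L} (h : U.1 ⊆ T.1) (h' : T.1 ⊆ W.1) (x : M W) :
    piM hM U T h (piM hM T W h' x) = piM hM U W (h.trans h') x :=
  Subtype.ext (piUT_piUT h h' x.1)

lemma piM_self (T : ↥L) (h : T.1 ⊆ T.1) (x : M T) : piM hM T T h x = x :=
  Subtype.ext (piUT_self T.1 h x.1)

lemma piBar_piBar {U T W : ↥L} (h : U.1 ⊆ T.1) (h' : T.1 ⊆ W.1) (x : Vspace W.1 ⧸ M W) :
    piBar hM U T h (piBar hM T W h' x) = piBar hM U W (h.trans h') x := by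
  obtain ⟨v, rfl⟩ := Submodule.Quotient.mk_surjective _ x
  simp only [piBar, Submodule.mapQ_apply, piUT_piUT]

lemma piBar_self (T : ↥L) (h : T.1 ⊆ T.1) (x : Vspace T.1 ⧸ M T) : piBar hM T T h x = x := by
  obtain ⟨v, rfl⟩ := Submodule.Quotient.mk_surjective _ x
  simp only [piBar, Submodule.mapQ_apply, piUT_self]

end

lemma Vspace.eq_zero_of_piUT_eq_zero {T T' : Finset α} (hI : (T ∩ T').Nonempty)
    (x : Vspace (T ∪ T')) (h : piUT T (T ∪ T') subset_union_left x = 0)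
    (h' : piUT T' (T ∪ T') subset_union_right x = 0) : x = 0 := by
  obtain ⟨g, rfl⟩ := Submodule.Quotient.mk_surjective _ x
  rw [piUT_mk, Vspace.mk_eq_zero_iff] at h h'
  obtain ⟨c, hc⟩ := h
  obtain ⟨c', hc'⟩ := h'
  obtain ⟨s, hs⟩ := hI
  have hcc' : c = c' := (hc ⟨s, (mem_inter.1 hs).1⟩).symm.trans (hc' ⟨s, (mem_inter.1 hs).2⟩)
  refine (Vspace.mk_eq_zero_iff g).2 ⟨c, fun ⟨w, hw⟩ => ?_⟩
  rcases mem_union.1 hw with hw | hw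
  · exact hc ⟨w, hw⟩
  · exact (hc' ⟨w, hw⟩).trans hcc'.symm

lemma restr_pi_surjective {ι : Type*} [Fintype ι] {S : Finset α} (T : ι → Finset α)
    (hT : ∀ i, T i ⊆ S) (hdisj : Pairwise (Disjoint on T)) :
    Surjective (LinearMap.pi fun i => restr (T i) S (hT i)) := by
  intro g
  refine ⟨fun s => ∑ i, if h : s.1 ∈ T i then g i ⟨s.1, h⟩ else 0,
    funext fun i => funext fun t => ?_⟩
  change (∑ j, if h : t.1 ∈ T j then g j ⟨t.1, h⟩ else 0) = g i t
  rw [Fintype.sum_eq_single i fun j hj => dif_neg fun h => disjoint_left.1 (hdisj hj) h t.2,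
    dif_pos t.2]

/-- A thicket with a point of `𝓜̄_𝓛`, bundled so that the induction on `|S|` can pass to
`restrictTo`. -/
structure ThicketPoint (α : Type*) [DecidableEq α] where
  S : Finset α
  L : Finset (Finset α)
  isThicket : IsThicket S L
  M : (T : ↥L) → Submodule ℂ (Vspace T.1)
  finrank_M : ∀ T, Module.finrank ℂ (M T) = 1
  hM : ∀ (U T : ↥L) (h : U.1 ⊆ T.1), M T ≤ Submodule.comap (piUT U.1 T.1 h) (M U)

namespace ThicketPoint

variable (D : ThicketPoint α)

abbrev top : ↥D.L := ⟨D.S, D.isThicket.1⟩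

lemma subset_S (T : ↥D.L) : T.1 ⊆ D.S := D.isThicket.2.1 T.1 T.2

lemma nonempty (T : ↥D.L) : T.1.Nonempty :=
  card_pos.mp (by linarith [D.isThicket.2.2.1 T.1 T.2])

def resTop (T : ↥D.L) : D.M D.top →ₗ[ℂ] D.M T := piM D.hM T D.top (D.subset_S T)

def quotTop (T : ↥D.L) : (Vspace D.S ⧸ D.M D.top) →ₗ[ℂ] (Vspace T.1 ⧸ D.M T) :=
  piBar D.hM T D.top (D.subset_S T)

/-- The line `M_S` consists of functions that are constant on `T`. -/
def Vanishes (T : ↥D.L) : Prop := D.resTop T = 0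

variable {D}

lemma Vanishes.mono {U T : ↥D.L} (hUT : U.1 ⊆ T.1) (hT : D.Vanishes T) : D.Vanishes U := by
  refine LinearMap.ext fun m => ?_
  rw [resTop, ← piM_piM D.hM hUT (D.subset_S T)]
  exact (congrArg _ (LinearMap.congr_fun hT m)).trans (map_zero _)

lemma Vanishes.union {T T' : ↥D.L} (hI : (T.1 ∩ T'.1).Nonempty) (hT : D.Vanishes T)
    (hT' : D.Vanishes T') :
    D.Vanishes ⟨T.1 ∪ T'.1, D.isThicket.2.2.2 T.1 T.2 T'.1 T'.2 hI⟩ := by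
  refine LinearMap.ext fun m => Subtype.ext (Vspace.eq_zero_of_piUT_eq_zero hI _ ?_ ?_)
  · exact (piUT_piUT _ _ _).trans (congrArg Subtype.val (LinearMap.congr_fun hT m))
  · exact (piUT_piUT _ _ _).trans (congrArg Subtype.val (LinearMap.congr_fun hT' m))

variable (D)

lemma not_vanishes_top : ¬ D.Vanishes D.top := by
  intro h
  have : Nontrivial (D.M D.top) :=
    Module.nontrivial_of_finrank_pos (R := ℂ) (by rw [D.finrank_M]; exact one_pos)
  obtain ⟨m, hm⟩ := exists_ne (0 : D.M D.top)
  exact hm ((piM_self D.hM D.top _ m).symm.trans (LinearMap.congr_fun h m))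

lemma bijective_resTop {T : ↥D.L} (hT : ¬ D.Vanishes T) : Bijective (D.resTop T) :=
  have := isSimpleModule_iff_finrank_eq_one.mpr (D.finrank_M D.top)
  have := isSimpleModule_iff_finrank_eq_one.mpr (D.finrank_M T)
  LinearMap.bijective_of_ne_zero hT

def resTopEquiv {T : ↥D.L} (hT : ¬ D.Vanishes T) : D.M D.top ≃ₗ[ℂ] D.M T :=
  LinearEquiv.ofBijective _ (D.bijective_resTop hT)

lemma piM_eq_zero {U T : ↥D.L} (hUT : U.1 ⊆ T.1) (hU : D.Vanishes U) (hT : ¬ D.Vanishes T) :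
    piM D.hM U T hUT = 0 := by
  refine (LinearMap.cancel_right (D.bijective_resTop hT).2).mp (LinearMap.ext fun m => ?_)
  exact (piM_piM D.hM hUT (D.subset_S T) m).trans (LinearMap.congr_fun hU m)

abbrev MaxVanishing : Type _ := {T : ↥D.L // Maximal D.Vanishes T}

noncomputable instance : Fintype D.MaxVanishing := Fintype.ofFinite _

variable {D}

lemma MaxVanishing.eq_of_nonempty_inter {i j : D.MaxVanishing}
    (hI : (i.1.1 ∩ j.1.1).Nonempty) : i = j := by
  have hU := Vanishes.union hI i.2.1 j.2.1
  exact Subtype.ext ((i.2.eq_of_le hU subset_union_left).trans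
    (j.2.eq_of_le hU subset_union_right).symm)

variable (D)

lemma exists_maxVanishing {T : ↥D.L} (hT : D.Vanishes T) : ∃ i : D.MaxVanishing, T.1 ⊆ i.1.1 :=
  let ⟨i, hTi, hi⟩ := Finite.exists_le_maximal hT
  ⟨⟨i, hi⟩, hTi⟩

def maxAbove {T : ↥D.L} (hT : D.Vanishes T) : D.MaxVanishing := (D.exists_maxVanishing hT).choose

lemma subset_maxAbove {T : ↥D.L} (hT : D.Vanishes T) : T.1 ⊆ (D.maxAbove hT).1.1 :=
  (D.exists_maxVanishing hT).choose_spec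

lemma maxAbove_eq {T : ↥D.L} (hT : D.Vanishes T) {i : D.MaxVanishing} (hTi : T.1 ⊆ i.1.1) :
    D.maxAbove hT = i := by
  obtain ⟨t, ht⟩ := D.nonempty T
  exact MaxVanishing.eq_of_nonempty_inter ⟨t, mem_inter.2 ⟨D.subset_maxAbove hT ht, hTi ht⟩⟩

lemma card_maxVanishing_lt (i : D.MaxVanishing) : i.1.1.card < D.S.card := by
  refine card_lt_card (Finset.ssubset_iff_subset_ne.2 ⟨D.subset_S i.1, fun h => ?_⟩)
  have hi : i.1 = D.top := Subtype.ext h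
  exact D.not_vanishes_top (hi ▸ i.2.1)

abbrev restrictTo (T : ↥D.L) : ThicketPoint α where
  S := T.1
  L := D.L.filter (· ⊆ T.1)
  isThicket := by
    refine ⟨mem_filter.2 ⟨T.2, subset_refl _⟩, fun U hU => (mem_filter.1 hU).2,
      fun U hU => D.isThicket.2.2.1 U (mem_filter.1 hU).1, fun U hU V hV hUV => ?_⟩
    rw [mem_filter] at hU hV ⊢
    exact ⟨D.isThicket.2.2.2 U hU.1 V hV.1 hUV, union_subset hU.2 hV.2⟩
  M U := D.M ⟨U.1, (mem_filter.1 U.2).1⟩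
  finrank_M U := D.finrank_M ⟨U.1, (mem_filter.1 U.2).1⟩
  hM U V h := D.hM ⟨U.1, (mem_filter.1 U.2).1⟩ ⟨V.1, (mem_filter.1 V.2).1⟩ h

lemma mem_restrictTo_L {T : ↥D.L} {U : Finset α} :
    U ∈ (D.restrictTo T).L ↔ U ∈ D.L ∧ U ⊆ T.1 :=
  mem_filter

abbrev SigmaSpace : Type _ := sigmaSub D.L D.M D.hM

abbrev HomTop (T : ↥D.L) : Type _ := D.M D.top →ₗ[ℂ] Vspace T.1 ⧸ D.M T

lemma finrank_homTop_add_two (T : ↥D.L) : Module.finrank ℂ (D.HomTop T) + 2 = T.1.card := by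
  have h := Submodule.finrank_quotient_add_finrank (D.M T)
  rw [D.finrank_M] at h
  rw [Module.finrank_linearMap, D.finrank_M, one_mul]
  linarith [finrank_Vspace_add_one (D.nonempty T)]

def eval : D.SigmaSpace →ₗ[ℂ] D.HomTop D.top :=
  (LinearMap.proj (φ := fun T : ↥D.L => D.M T →ₗ[ℂ] Vspace T.1 ⧸ D.M T) D.top).comp
    (Submodule.subtype _)

lemma eq_zero_of_eval_eq_zero {a : D.SigmaSpace} (ha : D.eval a = 0) {T : ↥D.L}
    (hT : ¬ D.Vanishes T) : a.1 T = 0 := by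
  have h := (mem_sigmaSub_iff D.hM).mp a.2 T D.top (D.subset_S T)
  rw [show a.1 D.top = 0 from ha, LinearMap.comp_zero, eq_comm,
    ← LinearMap.zero_comp (D.resTop T)] at h
  exact (LinearMap.cancel_right (D.bijective_resTop hT).2).mp h

def restrictMax : D.HomTop D.top →ₗ[ℂ] ((i : D.MaxVanishing) → D.HomTop i.1) :=
  LinearMap.pi fun i => LinearMap.llcomp ℂ _ _ _ (D.quotTop i.1)


variable {D}

lemma quotTop_comp_eq_zero {β : D.HomTop D.top} (hβ : β ∈ LinearMap.ker D.restrictMax)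
    {T : ↥D.L} (hT : D.Vanishes T) : (D.quotTop T).comp β = 0 := by
  have hi : (D.quotTop (D.maxAbove hT).1).comp β = 0 := congrFun (LinearMap.mem_ker.1 hβ) _
  refine LinearMap.ext fun m => ?_
  rw [LinearMap.comp_apply, quotTop,
    ← piBar_piBar D.hM (D.subset_maxAbove hT) (D.subset_S (D.maxAbove hT).1)]
  exact (congrArg _ (LinearMap.congr_fun hi m)).trans (map_zero _)

lemma resTopEquiv_symm_piM {U T : ↥D.L} (hUT : U.1 ⊆ T.1) (hU : ¬ D.Vanishes U)
    (hT : ¬ D.Vanishes T) (m : D.M T) :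
    (D.resTopEquiv hU).symm (piM D.hM U T hUT m) = (D.resTopEquiv hT).symm m := by
  rw [LinearEquiv.symm_apply_eq]
  conv_lhs => rw [← (D.resTopEquiv hT).apply_symm_apply m]
  exact piM_piM D.hM hUT (D.subset_S T) _

open scoped Classical in
variable (D) in
def extend (β : D.HomTop D.top) (T : ↥D.L) : D.M T →ₗ[ℂ] Vspace T.1 ⧸ D.M T :=
  if hT : D.Vanishes T then 0
  else (D.quotTop T).comp (β.comp (D.resTopEquiv hT).symm.toLinearMap)

lemma extend_top (β : D.HomTop D.top) : D.extend β D.top = β := by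
  refine LinearMap.ext fun m => ?_
  have hm : (D.resTopEquiv D.not_vanishes_top).symm m = m := by
    rw [LinearEquiv.symm_apply_eq]
    exact (piM_self D.hM D.top _ m).symm
  rw [extend, dif_neg D.not_vanishes_top, LinearMap.comp_apply, LinearMap.comp_apply,
    LinearEquiv.coe_coe, hm]
  exact piBar_self D.hM D.top _ _

lemma extend_mem {β : D.HomTop D.top} (hβ : β ∈ LinearMap.ker D.restrictMax) :
    D.extend β ∈ sigmaSub D.L D.M D.hM := by
  refine (mem_sigmaSub_iff D.hM).2 fun U T hUT => ?_
  by_cases hT : D.Vanishes T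
  · simp [extend, hT, hT.mono hUT]
  by_cases hU : D.Vanishes U
  · rw [D.piM_eq_zero hUT hU hT, LinearMap.comp_zero]
    refine LinearMap.ext fun m => ?_
    simp only [extend, dif_neg hT, LinearMap.comp_apply, quotTop]
    rw [piBar_piBar]
    exact LinearMap.congr_fun (quotTop_comp_eq_zero hβ hU) _
  · refine LinearMap.ext fun m => ?_
    simp only [extend, dif_neg hT, dif_neg hU, LinearMap.comp_apply, LinearEquiv.coe_coe,
      resTopEquiv_symm_piM hUT hU hT, quotTop]
    rw [piBar_piBar]

lemma range_eval : LinearMap.range D.eval = LinearMap.ker D.restrictMax := by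
  apply le_antisymm
  · rintro _ ⟨a, rfl⟩
    refine LinearMap.mem_ker.2 (funext fun i => ?_)
    have h := (mem_sigmaSub_iff D.hM).mp a.2 i.1 D.top (D.subset_S i.1)
    rw [show piM D.hM i.1 D.top _ = 0 from i.2.1, LinearMap.comp_zero] at h
    exact h
  · exact fun β hβ => ⟨⟨D.extend β, extend_mem hβ⟩, extend_top β⟩

variable (D)

lemma pairwise_disjoint_maxVanishing :
    Pairwise (Disjoint on fun i : D.MaxVanishing => i.1.1) :=
  fun _ _ hij => disjoint_left.2 fun _ hi hj =>
    hij (MaxVanishing.eq_of_nonempty_inter ⟨_, mem_inter.2 ⟨hi, hj⟩⟩)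

lemma surjective_pi_quotTop :
    Surjective (LinearMap.pi fun i : D.MaxVanishing => D.quotTop i.1) := by
  intro z
  have hz (i : D.MaxVanishing) : ∃ g : ↥i.1.1 → ℂ,
      Submodule.Quotient.mk (Submodule.Quotient.mk g : Vspace i.1.1) = z i := by
    obtain ⟨v, hv⟩ := Submodule.Quotient.mk_surjective _ (z i)
    obtain ⟨g, rfl⟩ := Submodule.Quotient.mk_surjective _ v
    exact ⟨g, hv⟩
  choose g hg using hz
  obtain ⟨f, hf⟩ := restr_pi_surjective (fun i : D.MaxVanishing => i.1.1)
    (fun i => D.subset_S i.1) D.pairwise_disjoint_maxVanishing g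
  refine ⟨Submodule.Quotient.mk (Submodule.Quotient.mk f), funext fun i => ?_⟩
  rw [← hg i, ← congrFun hf i]
  rfl

lemma surjective_restrictMax : Surjective D.restrictMax := by
  intro γ
  obtain ⟨β, hβ⟩ :=
    Module.projective_lifting_property _ (LinearMap.pi γ) D.surjective_pi_quotTop
  exact ⟨β, funext fun i => LinearMap.ext fun m => congrFun (LinearMap.congr_fun hβ m) i⟩

open scoped Classical in
def glue (y : (i : D.MaxVanishing) → (D.restrictTo i.1).SigmaSpace) (T : ↥D.L) :
    D.M T →ₗ[ℂ] Vspace T.1 ⧸ D.M T :=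
  if hT : D.Vanishes T then
    (y (D.maxAbove hT)).1 ⟨T.1, D.mem_restrictTo_L.2 ⟨T.2, D.subset_maxAbove hT⟩⟩
  else 0

lemma glue_of_subset (y : (i : D.MaxVanishing) → (D.restrictTo i.1).SigmaSpace) {T : ↥D.L}
    (i : D.MaxVanishing) (hTi : T.1 ⊆ i.1.1) :
    D.glue y T = (y i).1 ⟨T.1, D.mem_restrictTo_L.2 ⟨T.2, hTi⟩⟩ := by
  have hT : D.Vanishes T := i.2.1.mono hTi
  have reindex : ∀ j, j = i → ∀ hTj : T.1 ∈ (D.restrictTo j.1).L,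
      (y j).1 ⟨T.1, hTj⟩ = (y i).1 ⟨T.1, D.mem_restrictTo_L.2 ⟨T.2, hTi⟩⟩ := by
    rintro j rfl _
    rfl
  rw [glue, dif_pos hT]
  exact reindex _ (D.maxAbove_eq hT hTi) _

lemma glue_mem (y : (i : D.MaxVanishing) → (D.restrictTo i.1).SigmaSpace) :
    D.glue y ∈ sigmaSub D.L D.M D.hM := by
  refine (mem_sigmaSub_iff D.hM).2 fun U T hUT => ?_
  by_cases hT : D.Vanishes T
  · rw [D.glue_of_subset y _ (D.subset_maxAbove hT),
      D.glue_of_subset y _ (hUT.trans (D.subset_maxAbove hT))]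
    exact (y _).2 ⟨U.1, _⟩ ⟨T.1, _⟩ hUT
  by_cases hU : D.Vanishes U
  · simp only [glue, dif_neg hT, LinearMap.comp_zero, D.piM_eq_zero hUT hU hT]
  · simp only [glue, dif_neg hT, dif_neg hU, LinearMap.comp_zero, LinearMap.zero_comp]

def kerEvalEquiv :
    LinearMap.ker D.eval ≃ₗ[ℂ] ((i : D.MaxVanishing) → (D.restrictTo i.1).SigmaSpace) where
  toFun a i := ⟨fun U => a.1.1 ⟨U.1, (mem_filter.1 U.2).1⟩, fun _ _ h => a.1.2 _ _ h⟩
  map_add' _ _ := rfl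
  map_smul' _ _ := rfl
  invFun y := ⟨⟨D.glue y, D.glue_mem y⟩, by
      change D.glue y D.top = 0
      rw [glue, dif_neg D.not_vanishes_top]⟩
  left_inv a := by
    refine Subtype.ext (Subtype.ext (funext fun T => ?_))
    dsimp only
    by_cases hT : D.Vanishes T
    · rw [D.glue_of_subset _ _ (D.subset_maxAbove hT)]
    · rw [glue, dif_neg hT]
      exact (D.eq_zero_of_eval_eq_zero (LinearMap.mem_ker.1 a.2) hT).symm
  right_inv y :=
    funext fun i => Subtype.ext (funext fun U => D.glue_of_subset y i (mem_filter.1 U.2).2)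

theorem finrank_sigmaSpace_add_two :
    Module.finrank ℂ D.SigmaSpace + 2 = D.S.card := by
  induction hn : D.S.card using Nat.strong_induction_on generalizing D with
  | _ n ih =>
  subst hn
  have hparts (i : D.MaxVanishing) :
      Module.finrank ℂ (D.restrictTo i.1).SigmaSpace = Module.finrank ℂ (D.HomTop i.1) := by
    have := ih _ (D.card_maxVanishing_lt i) (D.restrictTo i.1) rfl
    have := D.finrank_homTop_add_two i.1
    omega
  have hσ := LinearMap.finrank_range_add_finrank_ker D.eval
  rw [D.range_eval, D.kerEvalEquiv.finrank_eq, Module.finrank_pi_fintype,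
    Finset.sum_congr rfl fun i _ => hparts i] at hσ
  have hK := LinearMap.finrank_range_add_finrank_ker (V := D.HomTop D.top)
    (V₂ := (i : D.MaxVanishing) → D.HomTop i.1) D.restrictMax
  rw [LinearMap.range_eq_top.2 D.surjective_restrictMax, finrank_top,
    Module.finrank_pi_fintype] at hK
  have htop : Module.finrank ℂ (D.HomTop D.top) + 2 = D.S.card :=
    D.finrank_homTop_add_two D.top
  omega

end ThicketPoint

/-- Lemma 6.3.4: for a thicket `L` on `S` and `M ∈ 𝓜̄_L`,
`dim_ℂ σ_{L,M} = |S| − 2`. -/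
theorem stmt10 (S : Finset α) (L : Finset (Finset α)) (hL : IsThicket S L)
    (M : (T : ↥L) → Submodule ℂ (Vspace T.1))
    (hdim : ∀ T, Module.finrank ℂ ↥(M T) = 1)
    (hM : ∀ (U T : ↥L) (h : U.1 ⊆ T.1),
      M T ≤ Submodule.comap (piUT U.1 T.1 h) (M U)) :
    Module.finrank ℂ ↥(sigmaSub L M hM) = S.card - 2 :=
  Nat.eq_sub_of_add_eq (ThicketPoint.finrank_sigmaSpace_add_two ⟨S, L, hL, M, hdim, hM⟩)

end
end

section
/- For every forest 𝓕 on S, the ideals I_𝓕 and J_𝓕 of ℤ_𝓕 are equal; in particular ℤ_𝓕/I_𝓕 = ℤ_𝓕/J_𝓕. -/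
variable {α : Type*} [DecidableEq α]

/-- The set of elements of `L` that are maximal in `L` under `T`. -/
def maxUnder (L : Finset (Finset α)) (T : Finset α) : Finset (Finset α) :=
  L.filter fun U => U ⊂ T ∧ ∀ V ∈ L, ¬ (U ⊂ V ∧ V ⊂ T)

/-- A forest on `S`. -/
def IsForest (S : Finset α) (F : Finset (Finset α)) : Prop :=
  (∀ T ∈ F, T ⊆ S) ∧ (∀ T ∈ F, 2 ≤ T.card) ∧
    ∀ U ∈ F, ∀ T ∈ F, U ⊆ T ∨ T ⊆ U ∨ U ∩ T = ∅

/-- `m(F, T) = (|T| - 1) - Σ_{U ∈ M(F,T)} (|U| - 1)` (a natural number for forests). -/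
def mNat (F : Finset (Finset α)) (T : Finset α) : ℕ :=
  T.card - 1 - ∑ U ∈ maxUnder F T, (U.card - 1)

noncomputable section

/-- The generator `y_T^{m(F,T)} ∏_{U ∈ M(F,T)} (y_T − y_U)` of the ideal `I_F`. -/
def relI (F : Finset (Finset α)) (T : ↥F) : MvPolynomial ↥F ℤ :=
  MvPolynomial.X T ^ mNat F T.1 *
    ∏ U ∈ (maxUnder F T.1).attach,
      (MvPolynomial.X T - MvPolynomial.X (⟨U.1, (Finset.mem_filter.mp U.2).1⟩ : ↥F))

/-- The ideal `I_F ⊆ ℤ_F`. -/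
def idealI (F : Finset (Finset α)) : Ideal (MvPolynomial ↥F ℤ) :=
  Ideal.span (Set.range (relI F))

/-- The generator `y_T^{(|T|−1) − Σ_{U ∈ Us}(|U|−1)} ∏_{U ∈ Us} (y_T − y_U)`
of the ideal `J_F`. -/
def relJ (F : Finset (Finset α)) (T : ↥F) (Us : Finset ↥F) : MvPolynomial ↥F ℤ :=
  MvPolynomial.X T ^ (T.1.card - 1 - ∑ U ∈ Us, (U.1.card - 1)) *
    ∏ U ∈ Us, (MvPolynomial.X T - MvPolynomial.X U)

/-- The ideal `J_F ⊆ ℤ_F`, generated by the relations attached to all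
(possibly empty) sets `Us ⊆ F` of pairwise disjoint proper subsets of `T ∈ F`. -/
def idealJ (F : Finset (Finset α)) : Ideal (MvPolynomial ↥F ℤ) :=
  Ideal.span {P | ∃ (T : ↥F) (Us : Finset ↥F),
    (∀ U ∈ Us, U.1 ⊂ T.1) ∧
    (∀ U ∈ Us, ∀ V ∈ Us, U ≠ V → U.1 ∩ V.1 = ∅) ∧
    P = relJ F T Us}

/-!
`I_F ⊆ J_F` because the maximal elements `M(F, T)` under `T` are pairwise disjoint proper
subsets of `T`. For `J_F ⊆ I_F`, induct on `|T|`. Each `U` in a family `𝓤` lies under exactly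
one `V ∈ M(F, T)`, and grouping `𝓤` accordingly writes the `J`-relation of `(T, 𝓤)` as
`y_T^{m(F,T)} ∏_{V ∈ M(F,T)} p_V`. Substituting `y_V` for `y_T` turns `p_V` into the
`J`-relation of `V` and of the members of `𝓤` below `V`, which lies in `I_F` by induction.
Hence `y_T - y_V` divides `p_V` modulo `I_F`, and the whole relation is divisible modulo `I_F`
by the `I`-relation `y_T^{m(F,T)} ∏_V (y_T - y_V)` of `T`.
-/

open Finset

@[to_additive]
lemma Finset.prod_prod_filter_of_existsUnique {ι κ M : Type*} [CommMonoid M] {s : Finset ι}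
    {t : Finset κ} (r : ι → κ → Prop) [∀ i j, Decidable (r i j)]
    (h : ∀ i ∈ s, ∃! j, j ∈ t ∧ r i j) (f : ι → M) :
    ∏ j ∈ t, ∏ i ∈ s with r i j, f i = ∏ i ∈ s, f i := by
  rw [prod_comm' (t' := s) (s' := fun i => {j ∈ t | r i j}) (f := fun _ i => f i)
    (by intro j i; simp only [mem_filter]; tauto)]
  refine prod_congr rfl fun i hi => ?_
  obtain ⟨j, hj, huniq⟩ := h i hi
  have hsingle : {j ∈ t | r i j} = {j} :=
    eq_singleton_iff_unique_mem.mpr ⟨mem_filter.mpr hj, fun k hk => huniq k (mem_filter.mp hk)⟩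
  rw [hsingle, prod_singleton]

lemma sum_card_sub_one_le_card_sub_one {ι : Type*} {V : Finset α} {s : Finset ι}
    {f : ι → Finset α} (hsub : ∀ i ∈ s, f i ⊆ V) (hne : ∀ i ∈ s, (f i).Nonempty)
    (hdisj : (s : Set ι).PairwiseDisjoint f) :
    ∑ i ∈ s, ((f i).card - 1) ≤ V.card - 1 := by
  rcases s.eq_empty_or_nonempty with rfl | hs
  · simp
  have hcard : ∑ i ∈ s, (f i).card ≤ V.card := by
    rw [← card_biUnion hdisj]
    exact card_le_card (biUnion_subset.mpr hsub)
  have hsplit : ∑ i ∈ s, ((f i).card - 1) + s.card = ∑ i ∈ s, (f i).card := by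
    rw [card_eq_sum_ones, ← sum_add_distrib]
    exact sum_congr rfl fun i hi => Nat.sub_add_cancel (hne i hi).card_pos
  have := hs.card_pos
  omega

open Polynomial in
lemma sub_dvd_pow_mul_prod_sub_sub {R ι : Type*} [CommRing R] (a b : R) (e : ℕ) (s : Finset ι)
    (c : ι → R) :
    a - b ∣ a ^ e * ∏ i ∈ s, (a - c i) - b ^ e * ∏ i ∈ s, (b - c i) := by
  have h := sub_dvd_eval_sub a b (X ^ e * ∏ i ∈ s, (X - C (c i)))
  simp only [eval_mul, eval_pow, eval_X, eval_prod, eval_sub, eval_C] at h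
  exact h

open MvPolynomial

def IsLaminar (F : Finset (Finset α)) : Prop :=
  ∀ U ∈ F, ∀ T ∈ F, U ⊆ T ∨ T ⊆ U ∨ U ∩ T = ∅

lemma IsForest.isLaminar {S : Finset α} {F : Finset (Finset α)} (hF : IsForest S F) :
    IsLaminar F :=
  hF.2.2

lemma IsForest.nonempty {S : Finset α} {F : Finset (Finset α)} (hF : IsForest S F)
    {T : Finset α} (hT : T ∈ F) : T.Nonempty :=
  card_pos.mp (by have := hF.2.1 T hT; omega)

section MaxUnder

variable {F : Finset (Finset α)} {T U V : Finset α}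

lemma mem_maxUnder :
    U ∈ maxUnder F T ↔ U ∈ F ∧ U ⊂ T ∧ ∀ V ∈ F, ¬ (U ⊂ V ∧ V ⊂ T) := by
  simp [maxUnder]

lemma IsLaminar.disjoint_of_mem_maxUnder (hF : IsLaminar F) (hU : U ∈ maxUnder F T)
    (hV : V ∈ maxUnder F T) (hne : U ≠ V) : Disjoint U V := by
  obtain ⟨hUF, hUT, hUmax⟩ := mem_maxUnder.mp hU
  obtain ⟨hVF, hVT, hVmax⟩ := mem_maxUnder.mp hV
  rcases hF U hUF V hVF with h | h | h
  · exact absurd ⟨h.ssubset_of_ne hne, hVT⟩ (hUmax V hVF)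
  · exact absurd ⟨h.ssubset_of_ne hne.symm, hUT⟩ (hVmax U hUF)
  · exact disjoint_iff_inter_eq_empty.mpr h

lemma exists_mem_maxUnder_superset (hU : U ∈ F) (hUT : U ⊂ T) :
    ∃ V ∈ maxUnder F T, U ⊆ V := by
  obtain ⟨V, hV, hVmax⟩ :=
    {V ∈ F | U ⊆ V ∧ V ⊂ T}.exists_maximal ⟨U, by simp [hU, hUT]⟩
  simp only [mem_filter] at hV
  refine ⟨V, mem_maxUnder.mpr ⟨hV.1, hV.2.2, ?_⟩, hV.2.1⟩
  rintro W hW ⟨hVW, hWT⟩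
  exact hVW.2 (hVmax (by simp [hW, hV.2.1.trans hVW.subset, hWT]) hVW.1)

end MaxUnder

/-- `M(F, T)`, as a finset of elements of `F`. -/
def children (F : Finset (Finset α)) (T : Finset α) : Finset F :=
  (maxUnder F T).attach.map
    ⟨fun U => ⟨U.1, (mem_filter.mp U.2).1⟩, fun _ _ h => Subtype.ext (by simpa using h)⟩

section Children

variable {F : Finset (Finset α)} {T : Finset α} {V : F}

lemma mem_children : V ∈ children F T ↔ V.1 ∈ maxUnder F T := by
  rw [children, mem_map]
  exact ⟨fun ⟨U, _, hUV⟩ => hUV ▸ U.2, fun h => ⟨⟨V.1, h⟩, mem_attach _ _, rfl⟩⟩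

lemma mNat_eq_sub_sum_children :
    mNat F T = T.card - 1 - ∑ V ∈ children F T, (V.1.card - 1) := by
  rw [mNat, children, sum_map, ← sum_attach (maxUnder F T)]
  rfl

lemma IsLaminar.pairwiseDisjoint_children (hF : IsLaminar F) :
    (children F T : Set F).PairwiseDisjoint Subtype.val := fun _ hU _ hV hne =>
  hF.disjoint_of_mem_maxUnder (mem_children.mp hU) (mem_children.mp hV)
    (fun h => hne (Subtype.ext h))

lemma IsLaminar.existsUnique_mem_children (hF : IsLaminar F) {U : F} (hne : U.1.Nonempty)
    (hUT : U.1 ⊂ T) : ∃! V, V ∈ children F T ∧ U.1 ⊆ V.1 := by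
  obtain ⟨V, hV, hUV⟩ := exists_mem_maxUnder_superset U.2 hUT
  refine ⟨⟨V, (mem_maxUnder.mp hV).1⟩, ⟨mem_children.mpr hV, hUV⟩,
    fun W ⟨hW, hUW⟩ => ?_⟩
  by_contra hWV
  obtain ⟨x, hx⟩ := hne
  exact disjoint_left.mp (hF.pairwiseDisjoint_children hW (mem_children.mpr hV) hWV)
    (hUW hx) (hUV hx)

lemma relI_eq_pow_mul_prod_children (T : F) :
    relI F T = X T ^ mNat F T.1 * ∏ V ∈ children F T.1, (X T - X V) := by
  rw [relI, children, prod_map]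
  rfl

lemma relI_eq_relJ_children (T : F) : relI F T = relJ F T (children F T.1) := by
  rw [relI_eq_pow_mul_prod_children, relJ, ← mNat_eq_sub_sum_children]

lemma IsLaminar.idealI_le_idealJ (hF : IsLaminar F) : idealI F ≤ idealJ F := by
  refine Ideal.span_le.mpr ?_
  rintro _ ⟨T, rfl⟩
  refine Ideal.subset_span ⟨T, children F T.1, fun V hV => ?_, fun U hU V hV hne => ?_,
    relI_eq_relJ_children T⟩
  · exact (mem_maxUnder.mp (mem_children.mp hV)).2.1
  · exact disjoint_iff_inter_eq_empty.mp (hF.pairwiseDisjoint_children hU hV hne)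

end Children

section Forest

variable {S : Finset α} {F : Finset (Finset α)}

lemma relJ_eq_pow_mul_prod_children (hF : IsForest S F) {T : F} {Us : Finset F}
    (hsub : ∀ U ∈ Us, U.1 ⊂ T.1) (hdisj : (Us : Set F).PairwiseDisjoint Subtype.val) :
    relJ F T Us = X T ^ mNat F T.1 * ∏ V ∈ children F T.1,
      (X T ^ (V.1.card - 1 - ∑ U ∈ Us with U.1 ⊆ V.1, (U.1.card - 1)) *
        ∏ U ∈ Us with U.1 ⊆ V.1, (X T - X U)) := by
  have huniq : ∀ U ∈ Us, ∃! V, V ∈ children F T.1 ∧ U.1 ⊆ V.1 := fun U hU =>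
    hF.isLaminar.existsUnique_mem_children (hF.nonempty U.2) (hsub U hU)
  have hbelow : ∀ V ∈ children F T.1,
      ∑ U ∈ Us with U.1 ⊆ V.1, (U.1.card - 1) ≤ V.1.card - 1 := fun V _ =>
    sum_card_sub_one_le_card_sub_one (fun U hU => (mem_filter.mp hU).2)
      (fun U _ => hF.nonempty U.2) (hdisj.subset (coe_subset.mpr (filter_subset _ _)))
  have hchildren : ∑ V ∈ children F T.1, (V.1.card - 1) ≤ T.1.card - 1 :=
    sum_card_sub_one_le_card_sub_one
      (fun V hV => (mem_maxUnder.mp (mem_children.mp hV)).2.1.subset)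
      (fun V _ => hF.nonempty V.2) hF.isLaminar.pairwiseDisjoint_children
  have hexp : T.1.card - 1 - ∑ U ∈ Us, (U.1.card - 1) = mNat F T.1 +
      ∑ V ∈ children F T.1, (V.1.card - 1 - ∑ U ∈ Us with U.1 ⊆ V.1, (U.1.card - 1)) := by
    rw [sum_tsub_distrib _ hbelow, ← sum_sum_filter_of_existsUnique _ huniq,
      mNat_eq_sub_sum_children]
    have := sum_le_sum hbelow
    omega
  rw [relJ, hexp, prod_mul_distrib, prod_pow_eq_pow_sum,
    prod_prod_filter_of_existsUnique _ huniq, pow_add, mul_assoc]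

lemma relJ_mem_idealI (hF : IsForest S F) (T : F) (Us : Finset F)
    (hsub : ∀ U ∈ Us, U.1 ⊆ T.1) (hdisj : (Us : Set F).PairwiseDisjoint Subtype.val) :
    relJ F T Us ∈ idealI F := by
  by_cases hT : T ∈ Us
  · rw [relJ, prod_eq_zero hT (sub_self _), mul_zero]
    exact zero_mem _
  have hssub : ∀ U ∈ Us, U.1 ⊂ T.1 := fun U hU =>
    (hsub U hU).ssubset_of_ne fun h => hT (Subtype.ext h ▸ hU)
  have hrelI : Ideal.Quotient.mk (idealI F) (relI F T) = 0 :=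
    Ideal.Quotient.eq_zero_iff_mem.mpr (Ideal.subset_span ⟨T, rfl⟩)
  rw [← Ideal.Quotient.eq_zero_iff_mem, ← zero_dvd_iff, ← hrelI,
    relI_eq_pow_mul_prod_children, relJ_eq_pow_mul_prod_children hF hssub hdisj,
    map_mul, map_mul, map_prod, map_prod]
  refine mul_dvd_mul_left _ (prod_dvd_prod_of_dvd _ _ fun V hV => ?_)
  have hVT : V.1 ⊂ T.1 := (mem_maxUnder.mp (mem_children.mp hV)).2.1
  have ih := relJ_mem_idealI hF V {U ∈ Us | U.1 ⊆ V.1} (fun U hU => (mem_filter.mp hU).2)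
    (hdisj.subset (coe_subset.mpr (filter_subset _ _)))
  have hsubst : X T - X V ∣ X T ^ (V.1.card - 1 - ∑ U ∈ Us with U.1 ⊆ V.1, (U.1.card - 1)) *
      ∏ U ∈ Us with U.1 ⊆ V.1, (X T - X U) - relJ F V {U ∈ Us | U.1 ⊆ V.1} :=
    sub_dvd_pow_mul_prod_sub_sub _ _ _ _ _
  have := map_dvd (Ideal.Quotient.mk (idealI F)) hsubst
  rwa [map_sub _ _ (relJ F V _), Ideal.Quotient.eq_zero_iff_mem.mpr ih, sub_zero] at this
termination_by T.1.card
decreasing_by exact card_lt_card hVT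

lemma IsForest.idealJ_le_idealI (hF : IsForest S F) : idealJ F ≤ idealI F := by
  refine Ideal.span_le.mpr ?_
  rintro _ ⟨T, Us, hsub, hdisj, rfl⟩
  exact relJ_mem_idealI hF T Us (fun U hU => (hsub U hU).subset)
    fun U hU V hV hne => disjoint_iff_inter_eq_empty.mpr (hdisj U hU V hV hne)

end Forest

/-- Lemma 5.1.15: for every forest `F` on `S`, `I_F = J_F`
(hence `ℤ_F/I_F = ℤ_F/J_F`). -/
theorem stmt13 (S : Finset α) (F : Finset (Finset α)) (hF : IsForest S F) :
    idealI F = idealJ F :=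
  le_antisymm hF.isLaminar.idealI_le_idealJ hF.idealJ_le_idealI

end
end
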